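/- arXiv:2602.17795 — 4 statements merged into one kernel-verified Lean document; each statement's English description precedes it below -/
import Mathlib

section
/- (Theorem 2.1, exact penalty.) Let x̄ be a local minimizer of problem (P), let X be closed, let f be Lipschitz with constant L on N_δ(x̄) ∩ X for some δ > 0, let the functions g_i (i = 1,…,m) be lower semicontinuous, and let the functions h_j (j = 1,…,q) be Hadamard differentiable on X (in every direction at every point of X) and lower semicontinuous. Suppose there exists a > 0 such that d(x) ≤ −a for all x ∈ N_δ(x̄) \ S. Then there exists an integer s such that x̄ is a local minimizer of the penalty function x ↦ F(x,γ) = f(x) + γ h(x) + ½‖x − x̄‖² over G for every γ > s. -/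
open Filter Topology

noncomputable section

/-- The lower Hadamard directional derivative of `f` at `x` in direction `u` with respect to
the set `S`, as an extended real number.  It is the `liminf` of the difference quotients
`(f (x + t • u') - f x) / t` as `(t, u') → (0⁺, u)` subject to `x + t • u' ∈ S`.
When `u` is not in the Bouligand tangent cone of `S` at `x` the restricting filter is the
bottom filter, and the `liminf` is `+∞`, in accordance with the convention
`∂⁻f(x;u;S) = +∞` for `u ∉ T(S,x)`. -/
def lowerHadamardDeriv {l : ℕ} (f : EuclideanSpace ℝ (Fin l) → ℝ) (S : Set (EuclideanSpace ℝ (Fin l)))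
    (x u : EuclideanSpace ℝ (Fin l)) : EReal :=
  Filter.liminf
    (fun p : ℝ × EuclideanSpace ℝ (Fin l) => (((f (x + p.1 • p.2) - f x) / p.1 : ℝ) : EReal))
    ((nhdsWithin (0 : ℝ) (Set.Ioi 0) ×ˢ nhds u) ⊓
      Filter.principal {p : ℝ × EuclideanSpace ℝ (Fin l) | x + p.1 • p.2 ∈ S})

/-- `f` is Hadamard differentiable at `x` in direction `u` with respect to `S`, with
(extended real) derivative `d`: the full limit of the difference quotients
`(f (x + t • u') - f x) / t` as `(t, u') → (0⁺, u)` subject to `x + t • u' ∈ S` exists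
and equals `d`. -/
def HasHadamardDerivAt {l : ℕ} (f : EuclideanSpace ℝ (Fin l) → ℝ) (S : Set (EuclideanSpace ℝ (Fin l)))
    (x u : EuclideanSpace ℝ (Fin l)) (d : EReal) : Prop :=
  Filter.Tendsto
    (fun p : ℝ × EuclideanSpace ℝ (Fin l) => (((f (x + p.1 • p.2) - f x) / p.1 : ℝ) : EReal))
    ((nhdsWithin (0 : ℝ) (Set.Ioi 0) ×ˢ nhds u) ⊓
      Filter.principal {p : ℝ × EuclideanSpace ℝ (Fin l) | x + p.1 • p.2 ∈ S})
    (nhds d)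

/-- The Bouligand tangent cone (contingent cone) of `S` at `x`. -/
def bouligandCone {l : ℕ} (S : Set (EuclideanSpace ℝ (Fin l))) (x : EuclideanSpace ℝ (Fin l)) : Set (EuclideanSpace ℝ (Fin l)) :=
  {u | ∃ (t : ℕ → ℝ) (v : ℕ → EuclideanSpace ℝ (Fin l)),
    (∀ k, 0 < t k) ∧ Filter.Tendsto t Filter.atTop (nhds 0) ∧
    Filter.Tendsto v Filter.atTop (nhds u) ∧ ∀ k, x + t k • v k ∈ S}

/-- `h := h₁² + ⋯ + h_q²`. -/
def hsum {l q : ℕ} (hf : Fin q → EuclideanSpace ℝ (Fin l) → ℝ) (x : EuclideanSpace ℝ (Fin l)) : ℝ :=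
  ∑ j, (hf j x) ^ 2

/-- `G := {x ∈ X : gᵢ(x) ≤ 0, i = 1,…,m}`. -/
def Gset {l m : ℕ} (X : Set (EuclideanSpace ℝ (Fin l))) (g : Fin m → EuclideanSpace ℝ (Fin l) → ℝ) : Set (EuclideanSpace ℝ (Fin l)) :=
  {x ∈ X | ∀ i, g i x ≤ 0}

/-- The feasible set `S := {x ∈ G : h(x) = 0}` of problem (P). -/
def Sset {l m q : ℕ} (X : Set (EuclideanSpace ℝ (Fin l))) (g : Fin m → EuclideanSpace ℝ (Fin l) → ℝ)
    (hf : Fin q → EuclideanSpace ℝ (Fin l) → ℝ) : Set (EuclideanSpace ℝ (Fin l)) :=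
  {x ∈ Gset X g | hsum hf x = 0}

/-- The penalty function `F(x,γ) := f(x) + γ h(x) + ½‖x - xbar‖²`. -/
def Fpen {l q : ℕ} (f : EuclideanSpace ℝ (Fin l) → ℝ) (hf : Fin q → EuclideanSpace ℝ (Fin l) → ℝ)
    (xbar : EuclideanSpace ℝ (Fin l)) (γ : ℝ) (x : EuclideanSpace ℝ (Fin l)) : ℝ :=
  f x + γ * hsum hf x + (1 / 2) * ‖x - xbar‖ ^ 2

/-- `d(x) := inf {∂⁻h(x;u;X) : u ∈ T(G,x), ‖u‖ = 1}` (an infimum in the extended reals). -/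
def dFun {l m q : ℕ} (hf : Fin q → EuclideanSpace ℝ (Fin l) → ℝ) (X : Set (EuclideanSpace ℝ (Fin l)))
    (g : Fin m → EuclideanSpace ℝ (Fin l) → ℝ) (x : EuclideanSpace ℝ (Fin l)) : EReal :=
  sInf {r : EReal | ∃ u ∈ bouligandCone (Gset X g) x, ‖u‖ = 1 ∧
    lowerHadamardDeriv (hsum hf) X x u = r}

/-!
At an infeasible point of `G` near `xbar` the hypothesis `d ≤ -a` supplies a direction along
which `h` decreases at a rate above `a/2`. Hence a minimizer of `h + (a/4)‖· - x₀‖` over the closed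
`δ`-ball (a compact form of Ekeland's principle) is feasible, which gives the local error bound
`(a/4) dist(x₀, S) ≤ h(x₀)`. If `y ∈ S` realizes it for `x`, then
`f xbar ≤ f y ≤ f x + L‖y - x‖ ≤ f x + γ h(x)` as soon as `γ ≥ 4|L|/a`; continuity of `h`
(Hadamard differentiability in direction `0`) keeps `y` within reach of the local minimality
of `xbar` when `x` is close to `xbar`.
-/

open Metric

theorem exists_zero_near_of_descent {E : Type*} [PseudoMetricSpace E] [ProperSpace E]
    {φ : E → ℝ} {c x₀ : E} {r κ : ℝ} (hκ : 0 < κ) (hφ : ContinuousOn φ (closedBall c r))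
    (hφ0 : ∀ y, 0 ≤ φ y)
    (hdesc : ∀ y ∈ ball c r, 0 < φ y → ∀ η > 0, ∃ z, dist z y < η ∧ φ z + κ * dist z y < φ y)
    (hx₀ : dist x₀ c + φ x₀ / κ < r) :
    ∃ y ∈ ball c r, φ y = 0 ∧ dist y x₀ ≤ φ x₀ / κ := by
  have hx₀c : x₀ ∈ closedBall c r :=
    mem_closedBall.2 (by linarith [div_nonneg (hφ0 x₀) hκ.le])
  have hψ : ContinuousOn (fun z => φ z + κ * dist z x₀) (closedBall c r) :=
    hφ.add (continuous_const.mul (continuous_id.dist continuous_const)).continuousOn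
  obtain ⟨y, hy, hymin⟩ := (isCompact_closedBall c r).exists_isMinOn ⟨x₀, hx₀c⟩ hψ
  have hyx₀ : dist y x₀ ≤ φ x₀ / κ := by
    have : φ y + κ * dist y x₀ ≤ φ x₀ + κ * dist x₀ x₀ := hymin hx₀c
    rw [dist_self, mul_zero, add_zero] at this
    rw [le_div_iff₀' hκ]
    linarith [hφ0 y]
  have hyc : dist y c < r := by linarith [dist_triangle y x₀ c]
  refine ⟨y, hyc, ?_, hyx₀⟩
  by_contra hy0
  obtain ⟨z, hzy, hz⟩ := hdesc y hyc ((hφ0 y).lt_of_ne' hy0) (r - dist y c) (by linarith)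
  have hzc : z ∈ closedBall c r := mem_closedBall.2 (by linarith [dist_triangle z y c])
  have : φ y + κ * dist y x₀ ≤ φ z + κ * dist z x₀ := hymin hzc
  nlinarith [dist_triangle z y x₀]

theorem HasHadamardDerivAt.continuousWithinAt {l : ℕ} {f : EuclideanSpace ℝ (Fin l) → ℝ}
    {X : Set (EuclideanSpace ℝ (Fin l))} {x : EuclideanSpace ℝ (Fin l)} {d : EReal}
    (hd : HasHadamardDerivAt f X x 0 d) (hx : x ∈ X) : ContinuousWithinAt f X x := by
  set F := (𝓝[>] (0 : ℝ) ×ˢ 𝓝 (0 : EuclideanSpace ℝ (Fin l))) ⊓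
    𝓟 {p : ℝ × EuclideanSpace ℝ (Fin l) | x + p.1 • p.2 ∈ X}
  -- along `u' = 0` the difference quotients vanish identically
  have hd0 : d = 0 := by
    have hpath : Tendsto (fun t : ℝ => (t, (0 : EuclideanSpace ℝ (Fin l)))) (𝓝[>] 0) F :=
      tendsto_inf.2 ⟨tendsto_id.prodMk tendsto_const_nhds,
        tendsto_principal.2 (Eventually.of_forall fun t => by simpa using hx)⟩
    refine tendsto_nhds_unique (hd.comp hpath) (tendsto_const_nhds.congr fun t => ?_)
    simp
  subst hd0
  -- write `z = x + t • u'` with `t = √‖z - x‖`, so that both `t → 0⁺` and `u' → 0`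
  set t : EuclideanSpace ℝ (Fin l) → ℝ := fun z => √‖z - x‖
  have hmem : ∀ᶠ z in 𝓝[X \ {x}] x, z ∈ X \ {x} := self_mem_nhdsWithin
  have ht_pos : ∀ᶠ z in 𝓝[X \ {x}] x, 0 < t z := hmem.mono fun z hz =>
    Real.sqrt_pos.2 (norm_pos_iff.2 (sub_ne_zero.2 hz.2))
  have ht : Tendsto t (𝓝[X \ {x}] x) (𝓝 0) := by
    have : Tendsto t (𝓝 x) (𝓝 (√‖x - x‖)) := (by fun_prop : Continuous t).tendsto x
    simpa using this.mono_left nhdsWithin_le_nhds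
  have hsplit : ∀ᶠ z in 𝓝[X \ {x}] x, x + t z • ((t z)⁻¹ • (z - x)) = z :=
    ht_pos.mono fun z hz => by rw [smul_inv_smul₀ hz.ne']; abel
  have hτ : Tendsto (fun z => (t z, (t z)⁻¹ • (z - x))) (𝓝[X \ {x}] x) F := by
    refine tendsto_inf.2 ⟨(tendsto_nhdsWithin_iff.2 ⟨ht, ht_pos⟩).prodMk ?_, ?_⟩
    · refine tendsto_zero_iff_norm_tendsto_zero.2 (ht.congr' (ht_pos.mono fun z hz => ?_))
      change t z = ‖(t z)⁻¹ • (z - x)‖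
      rw [norm_smul, norm_inv, Real.norm_of_nonneg hz.le, inv_mul_eq_div, Real.div_sqrt]
    · exact tendsto_principal.2 ((hsplit.and hmem).mono fun z hz => by
        simpa [hz.1] using hz.2.1)
  have hquot : Tendsto (fun z => (f z - f x) / t z) (𝓝[X \ {x}] x) (𝓝 0) := by
    rw [← EReal.tendsto_coe]
    refine (hd.comp hτ).congr' (hsplit.mono fun z hz => ?_)
    simp only [Function.comp, hz]
  have hdiff : Tendsto (fun z => f z - f x) (𝓝[X \ {x}] x) (𝓝 0) := by
    simpa using (hquot.mul ht).congr' (ht_pos.mono fun z hz => div_mul_cancel₀ _ hz.ne')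
  rw [← continuousWithinAt_sdiff_self, ContinuousWithinAt]
  simpa using hdiff.add_const (f x)

theorem exists_descent_of_lowerHadamardDeriv_lt {l : ℕ} {φ : EuclideanSpace ℝ (Fin l) → ℝ}
    {S : Set (EuclideanSpace ℝ (Fin l))} {y u : EuclideanSpace ℝ (Fin l)} {c η : ℝ}
    (hc : 0 < c) (hη : 0 < η) (hu : ‖u‖ = 1)
    (h : lowerHadamardDeriv φ S y u < ((-c : ℝ) : EReal)) :
    ∃ z ∈ S, ‖z - y‖ < η ∧ φ z + c / 2 * ‖z - y‖ < φ y := by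
  have hfreq := Filter.frequently_lt_of_liminf_lt (by isBoundedDefault) h
  have ht : ∀ᶠ t in 𝓝[>] (0 : ℝ), t ∈ Set.Ioo 0 (η / 2) := Ioo_mem_nhdsGT (by positivity)
  have hv : ∀ᶠ v in 𝓝 u, v ∈ ball u 1 := ball_mem_nhds u one_pos
  have hS : ∀ᶠ p : ℝ × EuclideanSpace ℝ (Fin l) in
      (𝓝[>] 0 ×ˢ 𝓝 u) ⊓ 𝓟 {p | y + p.1 • p.2 ∈ S}, y + p.1 • p.2 ∈ S :=
    mem_inf_of_right (mem_principal_self _)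
  obtain ⟨⟨t, v⟩, hq, hyS, ⟨ht0, htη⟩, hvu⟩ :=
    (hfreq.and_eventually (hS.and ((ht.prod_mk hv).filter_mono inf_le_left))).exists
  have hv2 : ‖v‖ < 2 := by
    rw [mem_ball, dist_eq_norm] at hvu
    linarith [norm_le_norm_add_norm_sub' v u]
  have hzy : ‖y + t • v - y‖ = t * ‖v‖ := by
    rw [add_sub_cancel_left, norm_smul, Real.norm_of_nonneg ht0.le]
  have hq' : φ (y + t • v) - φ y < -c * t := (div_lt_iff₀ ht0).1 (EReal.coe_lt_coe_iff.1 hq)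
  refine ⟨y + t • v, hyS, ?_, ?_⟩ <;> rw [hzy]
  · nlinarith
  · nlinarith [mul_pos (mul_pos hc ht0) (sub_pos.2 hv2)]

theorem hsum_nonneg {l q : ℕ} (hf : Fin q → EuclideanSpace ℝ (Fin l) → ℝ)
    (x : EuclideanSpace ℝ (Fin l)) : 0 ≤ hsum hf x :=
  Finset.sum_nonneg fun _ _ => sq_nonneg _

theorem continuousOn_hsum {l q : ℕ} {hf : Fin q → EuclideanSpace ℝ (Fin l) → ℝ}
    {X : Set (EuclideanSpace ℝ (Fin l))}
    (hdiff : ∀ j, ∀ x ∈ X, ∃ d : EReal, HasHadamardDerivAt (hf j) X x 0 d) :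
    ContinuousOn (hsum hf) X :=
  continuousOn_finsetSum _ fun j _ x hx =>
    ((hdiff j x hx).choose_spec.continuousWithinAt hx).pow 2

theorem mem_closure_of_mem_bouligandCone {l : ℕ} {S : Set (EuclideanSpace ℝ (Fin l))}
    {x u : EuclideanSpace ℝ (Fin l)} (hu : u ∈ bouligandCone S x) : x ∈ closure S := by
  obtain ⟨t, v, -, ht, hv, hS⟩ := hu
  have : Tendsto (fun k => x + t k • v k) atTop (𝓝 (x + (0 : ℝ) • u)) :=
    tendsto_const_nhds.add (ht.smul hv)
  rw [zero_smul, add_zero] at this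
  exact mem_closure_of_tendsto this (Eventually.of_forall hS)

theorem isClosed_Gset {l m : ℕ} {X : Set (EuclideanSpace ℝ (Fin l))}
    {g : Fin m → EuclideanSpace ℝ (Fin l) → ℝ} (hX : IsClosed X)
    (hg : ∀ i, LowerSemicontinuous (g i)) : IsClosed (Gset X g) := by
  have : Gset X g = X ∩ ⋂ i, g i ⁻¹' Set.Iic 0 := by
    ext x
    simp [Gset]
  rw [this]
  exact hX.inter (isClosed_iInter fun i => (hg i).isClosed_preimage 0)

section ErrorBound

variable {l m q : ℕ} {X : Set (EuclideanSpace ℝ (Fin l))}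
  {g : Fin m → EuclideanSpace ℝ (Fin l) → ℝ} {hf : Fin q → EuclideanSpace ℝ (Fin l) → ℝ}

-- `T(G, x) = ∅` off the closed set `G`, where `d(x) = sInf ∅ = ⊤`
theorem mem_Gset_of_dFun_ne_top (hX : IsClosed X) (hg : ∀ i, LowerSemicontinuous (g i))
    {x : EuclideanSpace ℝ (Fin l)} (hx : dFun hf X g x ≠ ⊤) : x ∈ Gset X g := by
  obtain ⟨-, ⟨u, hu, -⟩, -⟩ := sInf_lt_iff.1 (lt_top_iff_ne_top.2 hx)
  simpa [(isClosed_Gset hX hg).closure_eq] using mem_closure_of_mem_bouligandCone hu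

variable {xbar : EuclideanSpace ℝ (Fin l)} {δ a : ℝ}

theorem closedBall_subset_Gset (hX : IsClosed X) (hg : ∀ i, LowerSemicontinuous (g i))
    (hd : ∀ x, ‖x - xbar‖ ≤ δ → x ∉ Sset X g hf → dFun hf X g x ≤ ((-a : ℝ) : EReal)) :
    closedBall xbar δ ⊆ Gset X g := by
  intro x hx
  by_cases hxS : x ∈ Sset X g hf
  · exact hxS.1
  · refine mem_Gset_of_dFun_ne_top hX hg (ne_top_of_le_ne_top ?_ (hd x ?_ hxS))
    · exact EReal.coe_ne_top _
    · rwa [mem_closedBall, dist_eq_norm] at hx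

theorem exists_mem_Sset_near (hX : IsClosed X) (hg : ∀ i, LowerSemicontinuous (g i))
    (hcont : ContinuousOn (hsum hf) X) (ha : 0 < a)
    (hd : ∀ x, ‖x - xbar‖ ≤ δ → x ∉ Sset X g hf → dFun hf X g x ≤ ((-a : ℝ) : EReal))
    {x₀ : EuclideanSpace ℝ (Fin l)} (hx₀ : ‖x₀ - xbar‖ + hsum hf x₀ / (a / 4) < δ) :
    ∃ y ∈ Sset X g hf, ‖y - x₀‖ ≤ hsum hf x₀ / (a / 4) := by
  have hball := closedBall_subset_Gset hX hg hd
  have hdesc : ∀ y ∈ ball xbar δ, 0 < hsum hf y → ∀ η > 0,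
      ∃ z, dist z y < η ∧ hsum hf z + a / 4 * dist z y < hsum hf y := by
    intro y hy hpos η hη
    have hyS : y ∉ Sset X g hf := fun hS => hpos.ne' hS.2
    have hlt : dFun hf X g y < ((-(a / 2) : ℝ) : EReal) :=
      (hd y (by simpa [dist_eq_norm] using (mem_ball.1 hy).le) hyS).trans_lt
        (EReal.coe_lt_coe_iff.2 (by linarith))
    obtain ⟨-, ⟨u, -, hu, rfl⟩, hlt⟩ := sInf_lt_iff.1 hlt
    obtain ⟨z, -, hzy, hz⟩ := exists_descent_of_lowerHadamardDeriv_lt (by positivity) hη hu hlt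
    exact ⟨z, by rwa [dist_eq_norm], by rw [dist_eq_norm]; linarith⟩
  obtain ⟨y, hy, hy0, hyx₀⟩ := exists_zero_near_of_descent (by positivity)
    (hcont.mono (hball.trans fun _ h => h.1)) (hsum_nonneg hf) hdesc
    (by rwa [dist_eq_norm])
  exact ⟨y, ⟨hball (ball_subset_closedBall hy), hy0⟩, by rwa [dist_eq_norm] at hyx₀⟩

end ErrorBound

theorem exact_penalty_general
    {l m q : ℕ}
    {X : Set (EuclideanSpace ℝ (Fin l))}
    {f : EuclideanSpace ℝ (Fin l) → ℝ}
    {g : Fin m → EuclideanSpace ℝ (Fin l) → ℝ}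
    {hf : Fin q → EuclideanSpace ℝ (Fin l) → ℝ}
    {xbar : EuclideanSpace ℝ (Fin l)}
    {δ L a : ℝ}
    (hX : IsClosed X)
    (hfeas : xbar ∈ Sset X g hf)
    (hlocmin : ∃ ε > (0 : ℝ), ∀ x ∈ Sset X g hf, ‖x - xbar‖ ≤ ε → f xbar ≤ f x)
    (hδ : 0 < δ)
    (hLip : ∀ x ∈ {y | ‖y - xbar‖ ≤ δ} ∩ X, ∀ y ∈ {y | ‖y - xbar‖ ≤ δ} ∩ X,
      |f x - f y| ≤ L * ‖x - y‖)
    (hglsc : ∀ i, LowerSemicontinuous (g i))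
    (hhdiff : ∀ j, ∀ x ∈ X, ∀ u, ∃ d : EReal, HasHadamardDerivAt (hf j) X x u d)
    (ha : 0 < a)
    (hd : ∀ x, ‖x - xbar‖ ≤ δ → x ∉ Sset X g hf → dFun hf X g x ≤ ((-a : ℝ) : EReal)) :
    ∃ s : ℤ, ∀ γ : ℝ, (s : ℝ) < γ →
      ∃ ε > (0 : ℝ), ∀ x ∈ Gset X g, ‖x - xbar‖ ≤ ε →
        Fpen f hf xbar γ xbar ≤ Fpen f hf xbar γ x := by
  obtain ⟨ε₀, hε₀, hmin⟩ := hlocmin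
  have hcont := continuousOn_hsum fun j x hx => hhdiff j x hx 0
  obtain ⟨ρ, hρ, hρδ, hρε₀⟩ : ∃ ρ > 0, 2 * ρ ≤ δ ∧ 2 * ρ ≤ ε₀ :=
    ⟨min δ ε₀ / 2, by positivity, by linarith [min_le_left δ ε₀],
      by linarith [min_le_right δ ε₀]⟩
  obtain ⟨ε₁, hε₁, hsmall⟩ :=
    Metric.continuousWithinAt_iff.1 (hcont xbar hfeas.1.1) (a / 4 * ρ) (by positivity)
  refine ⟨⌈|L| / (a / 4)⌉, fun γ hγ => ⟨min ρ (ε₁ / 2), by positivity, fun x hxG hx => ?_⟩⟩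
  have hxρ : ‖x - xbar‖ ≤ ρ := hx.trans (min_le_left _ _)
  have hhx : hsum hf x / (a / 4) < ρ := by
    have := hsmall hxG.1 (by rw [dist_eq_norm]; linarith [min_le_right ρ (ε₁ / 2)])
    rwa [hfeas.2, Real.dist_eq, sub_zero, abs_of_nonneg (hsum_nonneg hf x),
      ← div_lt_iff₀' (by positivity)] at this
  obtain ⟨y, hyS, hyx⟩ := exists_mem_Sset_near (x₀ := x) hX hglsc hcont ha hd (by linarith)
  have hyxbar : ‖y - xbar‖ ≤ 2 * ρ := by
    linarith [norm_sub_le_norm_sub_add_norm_sub y x xbar]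
  have hfy : f xbar ≤ f y := hmin y hyS (hyxbar.trans hρε₀)
  have hfyx : f y - f x ≤ |L| * ‖y - x‖ :=
    (le_abs_self _).trans <| (hLip y ⟨hyxbar.trans hρδ, hyS.1.1⟩ x
      ⟨(by linarith : ‖x - xbar‖ ≤ δ), hxG.1⟩).trans (by gcongr; exact le_abs_self L)
  have hpen : |L| * ‖y - x‖ ≤ γ * hsum hf x :=
    calc |L| * ‖y - x‖ ≤ |L| * (hsum hf x / (a / 4)) := by gcongr
      _ = |L| / (a / 4) * hsum hf x := by ring
      _ ≤ γ * hsum hf x :=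
        mul_le_mul_of_nonneg_right ((Int.le_ceil _).trans hγ.le) (hsum_nonneg hf x)
  simp only [Fpen, hfeas.2, sub_self, norm_zero]
  linarith [sq_nonneg ‖x - xbar‖]

/-- Theorem 2.1 (exact penalty): under the stated hypotheses there is an integer `s` such
that `xbar` is a local minimizer of `F(·,γ)` over `G` for every `γ > s`. -/
theorem exact_penalty
    {l m q : ℕ}
    {X : Set (EuclideanSpace ℝ (Fin l))}
    {f : EuclideanSpace ℝ (Fin l) → ℝ}
    {g : Fin m → EuclideanSpace ℝ (Fin l) → ℝ}
    {hf : Fin q → EuclideanSpace ℝ (Fin l) → ℝ}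
    {xbar : EuclideanSpace ℝ (Fin l)}
    {δ L a : ℝ}
    (hX : IsClosed X)
    (hfeas : xbar ∈ Sset X g hf)
    (hlocmin : ∃ ε > (0 : ℝ), ∀ x ∈ Sset X g hf, ‖x - xbar‖ ≤ ε → f xbar ≤ f x)
    (hδ : 0 < δ)
    (hLip : ∀ x ∈ {y | ‖y - xbar‖ ≤ δ} ∩ X, ∀ y ∈ {y | ‖y - xbar‖ ≤ δ} ∩ X,
      |f x - f y| ≤ L * ‖x - y‖)
    (hglsc : ∀ i, LowerSemicontinuous (g i))
    (hhdiff : ∀ j, ∀ x ∈ X, ∀ u, ∃ d : EReal, HasHadamardDerivAt (hf j) X x u d)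
    (hhlsc : ∀ j, LowerSemicontinuous (hf j))
    (ha : 0 < a)
    (hd : ∀ x, ‖x - xbar‖ ≤ δ → x ∉ Sset X g hf → dFun hf X g x ≤ ((-a : ℝ) : EReal)) :
    ∃ s : ℤ, ∀ γ : ℝ, (s : ℝ) < γ →
      ∃ ε > (0 : ℝ), ∀ x ∈ Gset X g, ‖x - xbar‖ ≤ ε →
        Fpen f hf xbar γ xbar ≤ Fpen f hf xbar γ x :=
  exact_penalty_general hX hfeas hlocmin hδ hLip hglsc hhdiff ha hd
end
end

section
/- (Theorem 4.1, sufficient condition for an isolated local minimizer.) Let x̄ be a feasible point of problem (P). Suppose the functions g_i, i ∈ I(x̄), are Hadamard differentiable at x̄ with respect to X in every direction, and that there exist γ > 0 and multipliers λ = (λ_0, λ_1, …, λ_p) ∈ [0,∞)^{p+1} such that λ_0 ∂⁻F(·,γ)(x̄;u;X) + Σ_{i=1}^p λ_i (g_i)'_H(x̄;u;X) > 0 for every direction u ∈ ℝ^l with u ≠ 0. Then x̄ is an isolated local minimizer of problem (P). -/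
open Filter Topology

noncomputable section

/-! A failure of isolated minimality produces feasible points `x̄ + tₖ vₖ` with `tₖ → 0⁺`,
`vₖ → u ≠ 0` (compactness of the unit sphere) and `f(x̄ + tₖ vₖ) ≤ f(x̄) + εₖ tₖ`, `εₖ → 0`.
On the feasible set the penalty term vanishes, so along this sequence the difference quotients
of `F(·,γ)` are at most `εₖ + tₖ‖vₖ‖²/2 → 0`, and those of the active `gᵢ` are `≤ 0`. Hence
`∂⁻F(·,γ)(x̄;u;X) ≤ 0` and `(gᵢ)'_H(x̄;u;X) ≤ 0`, contradicting the positivity of the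
multiplier combination at `u`. -/

section DirectionalSeq

variable {E : Type*} [NormedAddCommGroup E] [NormedSpace ℝ E]

/-- `u ∈ bouligandCone S x` iff `IsDirectionalSeq S x u t v` for some `t`, `v`. -/
structure IsDirectionalSeq (S : Set E) (x u : E) (t : ℕ → ℝ) (v : ℕ → E) : Prop where
  pos : ∀ k, 0 < t k
  tendsto_scale : Tendsto t atTop (𝓝 0)
  tendsto_dir : Tendsto v atTop (𝓝 u)
  mem : ∀ k, x + t k • v k ∈ S

namespace IsDirectionalSeq

variable {S T : Set E} {x u : E} {t : ℕ → ℝ} {v : ℕ → E}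

theorem mono (hs : IsDirectionalSeq S x u t v) (hST : S ⊆ T) : IsDirectionalSeq T x u t v :=
  ⟨hs.pos, hs.tendsto_scale, hs.tendsto_dir, fun k => hST (hs.mem k)⟩

theorem tendsto_hadamard (hs : IsDirectionalSeq S x u t v) :
    Tendsto (fun k => (t k, v k)) atTop
      ((𝓝[>] (0 : ℝ) ×ˢ 𝓝 u) ⊓ 𝓟 {p : ℝ × E | x + p.1 • p.2 ∈ S}) :=
  tendsto_inf.mpr
    ⟨(tendsto_nhdsWithin_of_tendsto_nhds_of_eventually_within _ hs.tendsto_scale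
        (Eventually.of_forall hs.pos)).prodMk hs.tendsto_dir,
      tendsto_principal.mpr (Eventually.of_forall hs.mem)⟩

end IsDirectionalSeq

theorem exists_isDirectionalSeq_of_not_isolated [ProperSpace E] {S : Set E} {f : E → ℝ} {x : E}
    (h : ¬ ∃ A > (0 : ℝ), ∃ ε > (0 : ℝ), ∀ y ∈ S, ‖y - x‖ ≤ ε → f x + A * ‖y - x‖ ≤ f y) :
    ∃ u ≠ 0, ∃ (t : ℕ → ℝ) (v : ℕ → E) (ε : ℕ → ℝ), IsDirectionalSeq S x u t v ∧
      Tendsto ε atTop (𝓝 0) ∧ ∀ k, f (x + t k • v k) ≤ f x + ε k * t k := by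
  push Not at h
  choose y hyS hyx hfy using fun k : ℕ =>
    h _ (Nat.one_div_pos_of_nat (α := ℝ) (n := k)) _ Nat.one_div_pos_of_nat
  have hy0 : ∀ k, y k - x ≠ 0 := fun k he => by simpa [sub_eq_zero.mp he] using hfy k
  have hyx0 : Tendsto (fun k => y k - x) atTop (𝓝 0) :=
    squeeze_zero_norm hyx tendsto_one_div_add_atTop_nhds_zero_nat
  have hxy : ∀ k, x + ‖y k - x‖ • ‖y k - x‖⁻¹ • (y k - x) = y k := fun k => by
    rw [smul_smul, mul_inv_cancel₀ (norm_ne_zero_iff.mpr (hy0 k)), one_smul, add_sub_cancel]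
  obtain ⟨u, hu, φ, hφ, hvu⟩ := (isCompact_sphere (0 : E) 1).tendsto_subseq
    (x := fun k => ‖y k - x‖⁻¹ • (y k - x)) fun k => by
      simpa using norm_smul_inv_norm (𝕜 := ℝ) (hy0 k)
  refine ⟨u, ne_zero_of_mem_unit_sphere ⟨u, hu⟩, fun k => ‖y (φ k) - x‖,
    fun k => ‖y (φ k) - x‖⁻¹ • (y (φ k) - x), fun k => 1 / ((φ k : ℝ) + 1),
    ⟨fun k => norm_pos_iff.mpr (hy0 _), by simpa using (hyx0.comp hφ.tendsto_atTop).norm, hvu,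
      fun k => (hxy _).symm ▸ hyS _⟩,
    tendsto_one_div_add_atTop_nhds_zero_nat.comp hφ.tendsto_atTop, fun k => ?_⟩
  rw [hxy]
  exact (hfy _).le

end DirectionalSeq

section Hadamard

variable {l : ℕ} {f : EuclideanSpace ℝ (Fin l) → ℝ} {S : Set (EuclideanSpace ℝ (Fin l))}
  {x u : EuclideanSpace ℝ (Fin l)} {t : ℕ → ℝ} {v : ℕ → EuclideanSpace ℝ (Fin l)}

theorem IsDirectionalSeq.lowerHadamardDeriv_le (hs : IsDirectionalSeq S x u t v) {b : ℕ → ℝ}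
    {c : ℝ} (hq : ∀ k, (f (x + t k • v k) - f x) / t k ≤ b k) (hb : Tendsto b atTop (𝓝 c)) :
    lowerHadamardDeriv f S x u ≤ c :=
  calc lowerHadamardDeriv f S x u
      ≤ liminf (fun k => (((f (x + t k • v k) - f x) / t k : ℝ) : EReal)) atTop :=
        liminf_le_liminf_of_le hs.tendsto_hadamard
    _ ≤ liminf (fun k => (b k : EReal)) atTop :=
        liminf_le_liminf (Eventually.of_forall fun k => EReal.coe_le_coe_iff.mpr (hq k))
    _ = c := (EReal.tendsto_coe.mpr hb).liminf_eq

theorem HasHadamardDerivAt.nonpos_of_isDirectionalSeq {d : EReal}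
    (hd : HasHadamardDerivAt f S x u d) (hs : IsDirectionalSeq S x u t v)
    (hle : ∀ k, f (x + t k • v k) ≤ f x) : d ≤ 0 :=
  le_of_tendsto (hd.comp hs.tendsto_hadamard) <| Eventually.of_forall fun k =>
    EReal.coe_nonpos.mpr <| div_nonpos_of_nonpos_of_nonneg (sub_nonpos.mpr (hle k)) (hs.pos k).le

end Hadamard

theorem Fpen_eq_of_hsum_eq_zero {l q : ℕ} {f : EuclideanSpace ℝ (Fin l) → ℝ}
    {hf : Fin q → EuclideanSpace ℝ (Fin l) → ℝ} {xbar x : EuclideanSpace ℝ (Fin l)} {γ : ℝ}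
    (hx : hsum hf x = 0) : Fpen f hf xbar γ x = f x + ‖x - xbar‖ ^ 2 / 2 := by
  rw [Fpen, hx]
  ring

/-- Theorem 4.1 (sufficient condition for an isolated local minimizer). -/
theorem isolated_local_min_sufficient
    {l m q : ℕ}
    {X : Set (EuclideanSpace ℝ (Fin l))}
    {f : EuclideanSpace ℝ (Fin l) → ℝ}
    {g : Fin m → EuclideanSpace ℝ (Fin l) → ℝ}
    {hf : Fin q → EuclideanSpace ℝ (Fin l) → ℝ}
    {xbar : EuclideanSpace ℝ (Fin l)}
    {p : ℕ} (hp : p ≤ m)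
    (Dg : Fin m → EuclideanSpace ℝ (Fin l) → EReal)
    (hfeas : xbar ∈ Sset X g hf)
    (hactive : ∀ i : Fin m, g i xbar = 0 ↔ (i : ℕ) < p)
    (hDg : ∀ i : Fin m, (i : ℕ) < p → ∀ u, HasHadamardDerivAt (g i) X xbar u (Dg i u))
    (hcond : ∃ γ > (0 : ℝ), ∃ lam : Fin (p + 1) → ℝ, (∀ i, 0 ≤ lam i) ∧
      ∀ u : EuclideanSpace ℝ (Fin l), u ≠ 0 →
        (0 : EReal) < (lam 0 : EReal) * lowerHadamardDeriv (Fpen f hf xbar γ) X xbar u +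
          ∑ i : Fin p, (lam i.succ : EReal) * Dg ⟨i.1, lt_of_lt_of_le i.2 hp⟩ u) :
    ∃ A > (0 : ℝ), ∃ ε > (0 : ℝ), ∀ x ∈ Sset X g hf, ‖x - xbar‖ ≤ ε →
      f xbar + A * ‖x - xbar‖ ≤ f x := by
  obtain ⟨γ, -, lam, hlam, hpos⟩ := hcond
  by_contra hiso
  obtain ⟨u, hu, t, v, ε, hs, hε, hfε⟩ := exists_isDirectionalSeq_of_not_isolated hiso
  have hsX : IsDirectionalSeq X xbar u t v := hs.mono fun y hy => hy.1.1
  have hF : lowerHadamardDeriv (Fpen f hf xbar γ) X xbar u ≤ 0 := by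
    refine hsX.lowerHadamardDeriv_le (b := fun k => ε k + t k * ‖v k‖ ^ 2 / 2) (fun k => ?_)
      (by simpa using hε.add ((hs.tendsto_scale.mul (hs.tendsto_dir.norm.pow 2)).div_const 2))
    rw [Fpen_eq_of_hsum_eq_zero (hs.mem k).2, Fpen_eq_of_hsum_eq_zero hfeas.2,
      div_le_iff₀ (hs.pos k), add_sub_cancel_left, norm_smul, Real.norm_of_nonneg (hs.pos k).le,
      sub_self, norm_zero]
    linear_combination hfε k
  have hg : ∀ i : Fin p, Dg ⟨i.1, lt_of_lt_of_le i.2 hp⟩ u ≤ 0 := fun i =>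
    (hDg _ i.2 u).nonpos_of_isDirectionalSeq hsX fun k => by
      rw [(hactive _).mpr i.2]
      exact (hs.mem k).1.2 _
  exact (hpos u hu).not_ge <|
    add_nonpos (mul_nonpos_of_nonneg_of_nonpos (by exact_mod_cast hlam 0) hF)
      (Finset.sum_nonpos fun i _ => mul_nonpos_of_nonneg_of_nonpos (by exact_mod_cast hlam _) (hg i))
end
end

section
/- (Step 1 in the proof of Theorem 3.1: incompatibility of the primal system.) Fix γ > 0 and let x̄ ∈ S be a local minimizer of x ↦ F(x,γ) over G. Suppose the functions g_i with i ∉ I(x̄) are continuous at x̄ (so g_i(x̄) < 0 for such i), and the functions g_i with i ∈ I(x̄) are Hadamard differentiable at x̄ with respect to X in every direction. Then there is no direction u ∈ ℝ^l satisfying simultaneously ∂⁻F(·,γ)(x̄;u;X) < 0 and (g_i)'_H(x̄;u;X) < 0 for all i ∈ I(x̄). -/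
open Filter Topology

noncomputable section

/-- Step 1 in the proof of Theorem 3.1: incompatibility of the primal system. -/
theorem primal_system_incompatible
    {l m q : ℕ}
    {X : Set (EuclideanSpace ℝ (Fin l))}
    {f : EuclideanSpace ℝ (Fin l) → ℝ}
    {g : Fin m → EuclideanSpace ℝ (Fin l) → ℝ}
    {hf : Fin q → EuclideanSpace ℝ (Fin l) → ℝ}
    {xbar : EuclideanSpace ℝ (Fin l)}
    {γ : ℝ}
    (Dg : Fin m → EuclideanSpace ℝ (Fin l) → EReal)
    (hγ : 0 < γ)
    (hxbar : xbar ∈ Sset X g hf)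
    (hmin : ∃ ε > (0 : ℝ), ∀ x ∈ Gset X g, ‖x - xbar‖ ≤ ε →
      Fpen f hf xbar γ xbar ≤ Fpen f hf xbar γ x)
    (hgcont : ∀ i, g i xbar ≠ 0 → ContinuousAt (g i) xbar)
    (hDg : ∀ i, g i xbar = 0 → ∀ u, HasHadamardDerivAt (g i) X xbar u (Dg i u)) :
    ¬ ∃ u : EuclideanSpace ℝ (Fin l), lowerHadamardDeriv (Fpen f hf xbar γ) X xbar u < 0 ∧
      ∀ i, g i xbar = 0 → Dg i u < 0 := by
  rintro ⟨u, hFu, hgu⟩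
  obtain ⟨ε, hε, hmin⟩ := hmin
  set L := (nhdsWithin (0:ℝ) (Set.Ioi 0) ×ˢ nhds u) ⊓
    Filter.principal {p : ℝ × EuclideanSpace ℝ (Fin l) | xbar + p.1 • p.2 ∈ X} with hLdef
  have hfreq : ∃ᶠ p in L,
      (((Fpen f hf xbar γ (xbar + p.1 • p.2) - Fpen f hf xbar γ xbar) / p.1 : ℝ) : EReal)
        < (0 : EReal) :=
    Filter.frequently_lt_of_liminf_lt (by isBoundedDefault) hFu
  have hpos : ∀ᶠ p : ℝ × EuclideanSpace ℝ (Fin l) in L, (0:ℝ) < p.1 := by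
    have h1 : ∀ᶠ t in nhdsWithin (0:ℝ) (Set.Ioi 0), (0:ℝ) < t := self_mem_nhdsWithin
    exact (h1.prod_inl (nhds u)).filter_mono inf_le_left
  have hX : ∀ᶠ p : ℝ × EuclideanSpace ℝ (Fin l) in L, xbar + p.1 • p.2 ∈ X :=
    Filter.mem_inf_of_right (Filter.mem_principal_self _)
  have ht1 : Filter.Tendsto (fun p : ℝ × EuclideanSpace ℝ (Fin l) => p.1) L (nhds 0) :=
    (Filter.tendsto_fst.mono_left inf_le_left).mono_right nhdsWithin_le_nhds
  have ht2 : Filter.Tendsto (fun p : ℝ × EuclideanSpace ℝ (Fin l) => p.2) L (nhds u) :=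
    Filter.tendsto_snd.mono_left inf_le_left
  have htend : Filter.Tendsto (fun p : ℝ × EuclideanSpace ℝ (Fin l) => xbar + p.1 • p.2)
      L (nhds xbar) := by
    have h2 := ht1.smul ht2
    rw [zero_smul] at h2
    simpa using tendsto_const_nhds.add h2
  have hball : ∀ᶠ p : ℝ × EuclideanSpace ℝ (Fin l) in L, ‖(xbar + p.1 • p.2) - xbar‖ ≤ ε := by
    filter_upwards [htend.eventually (Metric.closedBall_mem_nhds xbar hε)] with p hp
    simpa [dist_eq_norm] using Metric.mem_closedBall.1 hp
  have hxG : xbar ∈ X ∧ ∀ i, g i xbar ≤ 0 := hxbar.1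
  have hg : ∀ᶠ p : ℝ × EuclideanSpace ℝ (Fin l) in L, ∀ i, g i (xbar + p.1 • p.2) ≤ 0 := by
    rw [Filter.eventually_all]
    intro i
    by_cases hi : g i xbar = 0
    · have hd := hDg i hi u
      have hev : ∀ᶠ p : ℝ × EuclideanSpace ℝ (Fin l) in L,
          (((g i (xbar + p.1 • p.2) - g i xbar) / p.1 : ℝ) : EReal) < (0 : EReal) :=
        hd.eventually_lt_const (hgu i hi)
      filter_upwards [hev, hpos] with p hq hp
      have hq' : (g i (xbar + p.1 • p.2) - g i xbar) / p.1 < 0 := by exact_mod_cast hq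
      rcases div_neg_iff.1 hq' with ⟨_, h2⟩ | ⟨h1, _⟩
      · linarith
      · linarith [hi ▸ h1]
    · have hlt : g i xbar < 0 := lt_of_le_of_ne (hxG.2 i) hi
      have := ((hgcont i hi).tendsto.comp htend).eventually_lt_const hlt
      filter_upwards [this] with p hp
      exact hp.le
  have hev := hpos.and (hX.and (hball.and hg))
  obtain ⟨p, ⟨hp1, hp2, hp3, hp4⟩, hFq⟩ := (hev.and_frequently hfreq).exists
  have hFq' : (Fpen f hf xbar γ (xbar + p.1 • p.2) - Fpen f hf xbar γ xbar) / p.1 < 0 := by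
    exact_mod_cast hFq
  have hle := hmin (xbar + p.1 • p.2) ⟨hp2, hp4⟩ hp3
  rcases div_neg_iff.1 hFq' with ⟨_, h2⟩ | ⟨h1, _⟩
  · linarith
  · linarith
end
end

section
/- (Key estimate in the proof of Theorem 2.1.) Let X ⊆ ℝ^l, let f be Lipschitz with constant L on N_δ(x̄) ∩ X for some δ > 0, let a > 0 and γ > 0, and let x ∈ G with ‖x − x̄‖ < δ. Suppose u ∈ T(G,x) with ‖u‖ = 1 and h is Hadamard differentiable at x with respect to X in direction u with h'_H(x;u;X) ≤ −a/2. Then the lower Hadamard derivative of x ↦ F(x,γ) = f(x) + γ h(x) + ½‖x − x̄‖² with respect to G at x in direction u satisfies ∂⁻F(·,γ)(x;u;G) ≤ 2L − (a/4)γ + 2δ. In particular it is negative for all γ > (2L + 2δ)·4/a. -/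
open Filter Topology

noncomputable section

/-!
Along the directions `(t, u') → (0⁺, u)` that stay in `G` (there are such directions, `u` being
tangent to `G`), the difference quotient of `F(·,γ)` splits into three parts: that of `f` is at
most `L‖u'‖ ≤ 2L` by the Lipschitz bound, that of `γ h` is eventually below `-(a/4)γ` because
`h'_H(x;u;X) ≤ -a/2 < -a/4` and `G ⊆ X`, and that of `½‖· - x̄‖²` equals
`⟪x - x̄, u'⟫ + t‖u'‖²/2`, which tends to `⟪x - x̄, u⟫ ≤ ‖x - x̄‖ < δ`. The `liminf` is then at
most the sum of the three bounds.
-/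

section HadamardFilter

variable {E : Type*} [NormedAddCommGroup E] [NormedSpace ℝ E]

def diffQuot (f : E → ℝ) (x : E) (p : ℝ × E) : ℝ :=
  (f (x + p.1 • p.2) - f x) / p.1

/-- `lowerHadamardDeriv f S x u` and `HasHadamardDerivAt f S x u d` are the `liminf` and the limit
of `diffQuot f x` along this filter. -/
def hadamardFilter (S : Set E) (x u : E) : Filter (ℝ × E) :=
  (𝓝[>] 0 ×ˢ 𝓝 u) ⊓ 𝓟 {p | x + p.1 • p.2 ∈ S}

variable {S T : Set E} {x u : E}

theorem hadamardFilter_mono (hST : S ⊆ T) : hadamardFilter S x u ≤ hadamardFilter T x u :=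
  inf_le_inf_left _ (principal_mono.2 fun _ hp => hST hp)

theorem hadamardFilter_le_nhds : hadamardFilter S x u ≤ 𝓝 ((0 : ℝ), u) := by
  rw [nhds_prod_eq]
  exact inf_le_left.trans (prod_mono nhdsWithin_le_nhds le_rfl)

theorem eventually_mem_hadamardFilter : ∀ᶠ p in hadamardFilter S x u, x + p.1 • p.2 ∈ S :=
  mem_inf_of_right (mem_principal_self _)

theorem eventually_pos_hadamardFilter : ∀ᶠ p in hadamardFilter S x u, 0 < p.1 :=
  (tendsto_fst.mono_left inf_le_left).eventually self_mem_nhdsWithin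

theorem tendsto_snd_hadamardFilter : Tendsto Prod.snd (hadamardFilter S x u) (𝓝 u) :=
  (continuous_snd.tendsto _).mono_left hadamardFilter_le_nhds

theorem tendsto_add_smul_hadamardFilter :
    Tendsto (fun p : ℝ × E => x + p.1 • p.2) (hadamardFilter S x u) (𝓝 x) := by
  have hcont : Continuous fun p : ℝ × E => x + p.1 • p.2 := by fun_prop
  simpa using (hcont.tendsto ((0 : ℝ), u)).mono_left hadamardFilter_le_nhds

theorem diffQuot_le_mul_of_abs_sub_le {f : E → ℝ} {L r t : ℝ} {w : E} (ht : 0 < t)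
    (hw : w ≠ 0) (hwr : ‖w‖ ≤ r) (hf : |f (x + t • w) - f x| ≤ L * ‖x + t • w - x‖) :
    diffQuot f x (t, w) ≤ L * r := by
  have hdist : ‖x + t • w - x‖ = t * ‖w‖ := by
    rw [add_sub_cancel_left, norm_smul, Real.norm_of_nonneg ht.le]
  rw [hdist] at hf
  have hL : 0 ≤ L :=
    nonneg_of_mul_nonneg_left ((abs_nonneg _).trans hf) (mul_pos ht (norm_pos_iff.2 hw))
  rw [diffQuot, div_le_iff₀ ht]
  calc f (x + t • w) - f x ≤ L * (t * ‖w‖) := (le_abs_self _).trans hf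
    _ = L * ‖w‖ * t := by ring
    _ ≤ L * r * t := by gcongr

theorem eventually_diffQuot_le_of_abs_sub_le {f : E → ℝ} {K : Set E} {L r : ℝ}
    (hf : ∀ y ∈ K, ∀ z ∈ K, |f y - f z| ≤ L * ‖y - z‖) (hx : x ∈ K)
    (hK : ∀ᶠ p in hadamardFilter S x u, x + p.1 • p.2 ∈ K) (hu : u ≠ 0) (hur : ‖u‖ < r) :
    ∀ᶠ p in hadamardFilter S x u, diffQuot f x p ≤ L * r := by
  have hw : ∀ᶠ p in hadamardFilter S x u, p.2 ≠ 0 ∧ ‖p.2‖ < r :=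
    tendsto_snd_hadamardFilter.eventually ((isOpen_ne.inter (isOpen_lt continuous_norm
      continuous_const)).mem_nhds ⟨hu, hur⟩)
  filter_upwards [hK, hw, eventually_pos_hadamardFilter] with p hpK ⟨hw0, hwr⟩ ht
  exact diffQuot_le_mul_of_abs_sub_le ht hw0 hwr.le (hf _ hpK _ hx)

end HadamardFilter

section HalfSqDist

variable {E : Type*} [NormedAddCommGroup E] [InnerProductSpace ℝ E] {S : Set E} {x u : E}

theorem diffQuot_half_sq_dist (z : E) {t : ℝ} (ht : t ≠ 0) (w : E) :
    diffQuot (fun y => 1 / 2 * ‖y - z‖ ^ 2) x (t, w) = inner ℝ (x - z) w + t * ‖w‖ ^ 2 / 2 := by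
  have hsq : ‖x + t • w - z‖ ^ 2 = ‖x - z‖ ^ 2 + 2 * (t * inner ℝ (x - z) w) + t ^ 2 * ‖w‖ ^ 2 := by
    rw [add_sub_right_comm, norm_add_sq_real, real_inner_smul_right, norm_smul,
      Real.norm_eq_abs, mul_pow, sq_abs]
  simp only [diffQuot, hsq]
  field_simp
  ring

theorem tendsto_diffQuot_half_sq_dist (z : E) :
    Tendsto (diffQuot (fun y => 1 / 2 * ‖y - z‖ ^ 2) x) (hadamardFilter S x u)
      (𝓝 (inner ℝ (x - z) u)) := by
  have hcont : Continuous fun p : ℝ × E => inner ℝ (x - z) p.2 + p.1 * ‖p.2‖ ^ 2 / 2 := by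
    fun_prop
  have hlim := (hcont.tendsto ((0 : ℝ), u)).mono_left (hadamardFilter_le_nhds (S := S) (x := x))
  simp only [zero_mul, zero_div, add_zero] at hlim
  refine hlim.congr' ?_
  filter_upwards [eventually_pos_hadamardFilter] with p hp
  exact (diffQuot_half_sq_dist z hp.ne' p.2).symm

end HalfSqDist

section Euclidean

variable {l : ℕ} {S X : Set (EuclideanSpace ℝ (Fin l))} {x u : EuclideanSpace ℝ (Fin l)}

theorem hadamardFilter_neBot (hu : u ∈ bouligandCone S x) : (hadamardFilter S x u).NeBot := by
  obtain ⟨t, v, htpos, ht, hv, hmem⟩ := hu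
  have htv : Tendsto (fun k => (t k, v k)) atTop (hadamardFilter S x u) :=
    tendsto_inf.2 ⟨(tendsto_nhdsWithin_of_tendsto_nhds_of_eventually_within _ ht
      (Eventually.of_forall htpos)).prodMk hv, tendsto_principal.2 (Eventually.of_forall hmem)⟩
  exact neBot_of_le htv

theorem lowerHadamardDeriv_le_of_eventually_le {f : EuclideanSpace ℝ (Fin l) → ℝ} {c : ℝ}
    [(hadamardFilter S x u).NeBot] (hf : ∀ᶠ p in hadamardFilter S x u, diffQuot f x p ≤ c) :
    lowerHadamardDeriv f S x u ≤ c :=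
  liminf_le_of_frequently_le' (hf.mono fun _ hp => EReal.coe_le_coe hp).frequently

theorem HasHadamardDerivAt.eventually_diffQuot_lt {h : EuclideanSpace ℝ (Fin l) → ℝ}
    {d : EReal} {c : ℝ} (hd : HasHadamardDerivAt h X x u d) (hSX : S ⊆ X) (hdc : d < c) :
    ∀ᶠ p in hadamardFilter S x u, diffQuot h x p < c :=
  ((hd.mono_left (hadamardFilter_mono hSX)).eventually_lt_const hdc).mono
    fun _ hp => EReal.coe_lt_coe_iff.1 hp

end Euclidean

theorem diffQuot_Fpen {l q : ℕ} (f : EuclideanSpace ℝ (Fin l) → ℝ)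
    (hf : Fin q → EuclideanSpace ℝ (Fin l) → ℝ) (xbar : EuclideanSpace ℝ (Fin l)) (γ : ℝ)
    (x : EuclideanSpace ℝ (Fin l)) (p : ℝ × EuclideanSpace ℝ (Fin l)) :
    diffQuot (Fpen f hf xbar γ) x p = diffQuot f x p + γ * diffQuot (hsum hf) x p
      + diffQuot (fun y => 1 / 2 * ‖y - xbar‖ ^ 2) x p := by
  simp only [diffQuot, Fpen]
  ring

theorem penalty_derivative_estimate_general
    {l m q : ℕ}
    {X : Set (EuclideanSpace ℝ (Fin l))}
    {f : EuclideanSpace ℝ (Fin l) → ℝ}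
    {g : Fin m → EuclideanSpace ℝ (Fin l) → ℝ}
    {hf : Fin q → EuclideanSpace ℝ (Fin l) → ℝ}
    {xbar : EuclideanSpace ℝ (Fin l)}
    {δ L a γ : ℝ} {x u : EuclideanSpace ℝ (Fin l)} {dh : EReal}
    (hLip : ∀ x ∈ {y | ‖y - xbar‖ ≤ δ} ∩ X, ∀ y ∈ {y | ‖y - xbar‖ ≤ δ} ∩ X,
      |f x - f y| ≤ L * ‖x - y‖)
    (ha : 0 < a) (hγ : 0 < γ)
    (hxG : x ∈ Gset X g)
    (hxδ : ‖x - xbar‖ < δ)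
    (hu : u ∈ bouligandCone (Gset X g) x)
    (hunorm : ‖u‖ = 1)
    (hder : HasHadamardDerivAt (hsum hf) X x u dh)
    (hdh : dh ≤ ((-(a / 2) : ℝ) : EReal)) :
    lowerHadamardDeriv (Fpen f hf xbar γ) (Gset X g) x u
        ≤ ((2 * L - a / 4 * γ + 2 * δ : ℝ) : EReal) ∧
      ((2 * L + 2 * δ) * 4 / a < γ →
        lowerHadamardDeriv (Fpen f hf xbar γ) (Gset X g) x u < 0) := by
  have := hadamardFilter_neBot hu
  have hGX : Gset X g ⊆ X := fun _ hy => hy.1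
  have hnear : ∀ᶠ p in hadamardFilter (Gset X g) x u, x + p.1 • p.2 ∈ {y | ‖y - xbar‖ ≤ δ} ∩ X := by
    have hball := (tendsto_add_smul_hadamardFilter (S := Gset X g) (u := u)).eventually
      ((isOpen_lt (continuous_id.sub continuous_const).norm continuous_const).mem_nhds hxδ)
    filter_upwards [hball, eventually_mem_hadamardFilter] with p hp hpG
    exact ⟨le_of_lt hp, hpG.1⟩
  have hfq := eventually_diffQuot_le_of_abs_sub_le hLip ⟨hxδ.le, hxG.1⟩ hnear
    (by rw [← norm_ne_zero_iff, hunorm]; exact one_ne_zero) (by rw [hunorm]; norm_num : ‖u‖ < 2)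
  have hhq := hder.eventually_diffQuot_lt hGX
    (c := -(a / 4)) (hdh.trans_lt (EReal.coe_lt_coe_iff.2 (by linarith)))
  have hnq := (tendsto_diffQuot_half_sq_dist (S := Gset X g) (u := u) xbar).eventually_lt_const
    (((real_inner_le_norm _ _).trans_eq (by rw [hunorm, mul_one])).trans_lt hxδ)
  have hbound : lowerHadamardDeriv (Fpen f hf xbar γ) (Gset X g) x u
      ≤ ((2 * L - a / 4 * γ + 2 * δ : ℝ) : EReal) := by
    refine lowerHadamardDeriv_le_of_eventually_le ?_
    filter_upwards [hfq, hhq, hnq] with p hpf hph hpn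
    rw [diffQuot_Fpen]
    linarith [mul_le_mul_of_nonneg_left hph.le hγ.le, norm_nonneg (x - xbar)]
  refine ⟨hbound, fun hγa => hbound.trans_lt (EReal.coe_lt_coe_iff.2 ?_)⟩
  linarith [(div_lt_iff₀ ha).1 hγa]

/-- Key estimate in the proof of Theorem 2.1. -/
theorem penalty_derivative_estimate
    {l m q : ℕ}
    {X : Set (EuclideanSpace ℝ (Fin l))}
    {f : EuclideanSpace ℝ (Fin l) → ℝ}
    {g : Fin m → EuclideanSpace ℝ (Fin l) → ℝ}
    {hf : Fin q → EuclideanSpace ℝ (Fin l) → ℝ}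
    {xbar : EuclideanSpace ℝ (Fin l)}
    {δ L a γ : ℝ} {x u : EuclideanSpace ℝ (Fin l)} {dh : EReal}
    (hδ : 0 < δ)
    (hLip : ∀ x ∈ {y | ‖y - xbar‖ ≤ δ} ∩ X, ∀ y ∈ {y | ‖y - xbar‖ ≤ δ} ∩ X,
      |f x - f y| ≤ L * ‖x - y‖)
    (ha : 0 < a) (hγ : 0 < γ)
    (hxG : x ∈ Gset X g)
    (hxδ : ‖x - xbar‖ < δ)
    (hu : u ∈ bouligandCone (Gset X g) x)
    (hunorm : ‖u‖ = 1)
    (hder : HasHadamardDerivAt (hsum hf) X x u dh)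
    (hdh : dh ≤ ((-(a / 2) : ℝ) : EReal)) :
    lowerHadamardDeriv (Fpen f hf xbar γ) (Gset X g) x u
        ≤ ((2 * L - a / 4 * γ + 2 * δ : ℝ) : EReal) ∧
      ((2 * L + 2 * δ) * 4 / a < γ →
        lowerHadamardDeriv (Fpen f hf xbar γ) (Gset X g) x u < 0) :=
  penalty_derivative_estimate_general hLip ha hγ hxG hxδ hu hunorm hder hdh
end
end
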